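/- arXiv:2310.17298 — 9 statements merged into one kernel-verified Lean document; each statement's English description precedes it below -/
import Mathlib

section
/- In a bounded modular lattice, if a₁ ∼_{c₁} b₁, a₂ ∼_{c₂} b₂, and (a₁ ∨ b₁) ∧ (a₂ ∨ b₂) ≤ a₁ ∧ b₁ ∧ a₂ ∧ b₂, then a₁ ∨ a₂ ∼_{c₁ ∨ c₂} b₁ ∨ b₂. -/
/-- `a ∼_c b`: `a` and `b` are perspective via axis `c`. -/
def PerspVia {α : Type*} [Lattice α] (a b c : α) : Prop :=
  a ⊔ b = a ⊔ c ∧ a ⊔ b = b ⊔ c ∧ a ⊓ b = a ⊓ c ∧ a ⊓ b = b ⊓ c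

private lemma key {α : Type*} [Lattice α] [IsModularLattice α] (a₁ b₁ a₂ b₂ : α)
    (h : (a₁ ⊔ b₁) ⊓ (a₂ ⊔ b₂) ≤ a₁ ⊓ b₁ ⊓ (a₂ ⊓ b₂)) :
    (a₁ ⊔ a₂) ⊓ (b₁ ⊔ b₂) = a₁ ⊓ b₁ ⊔ a₂ ⊓ b₂ := by
  set s₁ := a₁ ⊔ b₁ with hs₁
  set s₂ := a₂ ⊔ b₂ with hs₂
  set u := (a₁ ⊔ a₂) ⊓ (b₁ ⊔ b₂) with hu
  -- easy direction
  have hge : a₁ ⊓ b₁ ⊔ a₂ ⊓ b₂ ≤ u :=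
    sup_le (le_inf (le_sup_of_le_left inf_le_left) (le_sup_of_le_left inf_le_right))
      (le_inf (le_sup_of_le_right inf_le_left) (le_sup_of_le_right inf_le_right))
  have h12 : s₁ ⊓ s₂ ≤ a₁ ⊓ b₁ ⊓ (a₂ ⊓ b₂) := h
  -- a₁ ⊓ (s₂ ⊔ b₁) ≤ a₁ ⊓ b₁
  have hstep : a₁ ⊓ (s₂ ⊔ b₁) ≤ a₁ ⊓ b₁ := by
    have h1 : a₁ ⊓ (s₂ ⊔ b₁) ≤ s₁ ⊓ (s₂ ⊔ b₁) := inf_le_inf_right _ le_sup_left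
    have heq : s₁ ⊓ (s₂ ⊔ b₁) = b₁ := by
      rw [inf_comm, sup_comm, sup_inf_assoc_of_le s₂ le_sup_right, sup_eq_left]
      exact (inf_comm s₂ s₁).le.trans (h12.trans (inf_le_left.trans inf_le_right))
    exact le_inf inf_le_left (h1.trans heq.le)
  -- u ≤ (a₁ ⊓ b₁) ⊔ s₂
  have hub : u ≤ a₁ ⊓ b₁ ⊔ s₂ := by
    have h1 : u ≤ (s₂ ⊔ a₁) ⊓ (s₂ ⊔ b₁) :=
      le_inf (inf_le_left.trans (sup_le le_sup_right (le_sup_of_le_left le_sup_left)))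
        (inf_le_right.trans (sup_le le_sup_right (le_sup_of_le_left le_sup_right)))
    have h2 : (s₂ ⊔ a₁) ⊓ (s₂ ⊔ b₁) = s₂ ⊔ a₁ ⊓ (s₂ ⊔ b₁) :=
      sup_inf_assoc_of_le a₁ le_sup_left
    calc u ≤ s₂ ⊔ a₁ ⊓ (s₂ ⊔ b₁) := h1.trans h2.le
      _ ≤ s₂ ⊔ a₁ ⊓ b₁ := sup_le_sup_left hstep _
      _ = a₁ ⊓ b₁ ⊔ s₂ := sup_comm _ _
  -- u ⊓ s₂ ≤ a₂ ⊓ b₂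
  have hus₂ : u ⊓ s₂ ≤ a₂ ⊓ b₂ := by
    have h21 : s₁ ⊓ s₂ ≤ a₂ ⊓ b₂ := h12.trans inf_le_right
    have ha : (a₁ ⊔ a₂) ⊓ s₂ ≤ a₂ := by
      rw [sup_comm, sup_inf_assoc_of_le a₁ le_sup_left]
      exact sup_le le_rfl ((inf_le_inf_right _ le_sup_left).trans (h21.trans inf_le_left))
    have hb : (b₁ ⊔ b₂) ⊓ s₂ ≤ b₂ := by
      rw [sup_comm, sup_inf_assoc_of_le b₁ le_sup_right]
      exact sup_le le_rfl ((inf_le_inf_right _ le_sup_right).trans (h21.trans inf_le_right))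
    exact le_inf ((inf_le_inf_right _ inf_le_left).trans ha)
      ((inf_le_inf_right _ inf_le_right).trans hb)
  -- finish
  have habu : a₁ ⊓ b₁ ≤ u := le_sup_left.trans hge
  have hle : u ≤ a₁ ⊓ b₁ ⊔ a₂ ⊓ b₂ := by
    calc u = (a₁ ⊓ b₁ ⊔ s₂) ⊓ u := (inf_eq_right.mpr hub).symm
      _ = a₁ ⊓ b₁ ⊔ s₂ ⊓ u := sup_inf_assoc_of_le s₂ habu
      _ ≤ a₁ ⊓ b₁ ⊔ a₂ ⊓ b₂ := sup_le_sup_left ((inf_comm s₂ u).le.trans hus₂) _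
  exact le_antisymm hle hge

/-- In a bounded modular lattice, if `a₁ ∼_{c₁} b₁`, `a₂ ∼_{c₂} b₂`, and
`(a₁ ⊔ b₁) ⊓ (a₂ ⊔ b₂) ≤ a₁ ⊓ b₁ ⊓ a₂ ⊓ b₂`, then `a₁ ⊔ a₂ ∼_{c₁ ⊔ c₂} b₁ ⊔ b₂`. -/
theorem stmt3 {α : Type*} [Lattice α] [BoundedOrder α] [IsModularLattice α]
    (a₁ b₁ c₁ a₂ b₂ c₂ : α)
    (h1 : PerspVia a₁ b₁ c₁) (h2 : PerspVia a₂ b₂ c₂)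
    (h : (a₁ ⊔ b₁) ⊓ (a₂ ⊔ b₂) ≤ a₁ ⊓ b₁ ⊓ a₂ ⊓ b₂) :
    PerspVia (a₁ ⊔ a₂) (b₁ ⊔ b₂) (c₁ ⊔ c₂) := by
  obtain ⟨h1s, h1s', h1i, h1i'⟩ := h1
  obtain ⟨h2s, h2s', h2i, h2i'⟩ := h2
  have h' : (a₁ ⊔ b₁) ⊓ (a₂ ⊔ b₂) ≤ a₁ ⊓ b₁ ⊓ (a₂ ⊓ b₂) := by
    rwa [← inf_assoc]
  have hac : (a₁ ⊔ c₁) ⊓ (a₂ ⊔ c₂) ≤ a₁ ⊓ c₁ ⊓ (a₂ ⊓ c₂) := by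
    rw [← h1s, ← h2s, ← h1i, ← h2i]; exact h'
  have hbc : (b₁ ⊔ c₁) ⊓ (b₂ ⊔ c₂) ≤ b₁ ⊓ c₁ ⊓ (b₂ ⊓ c₂) := by
    rw [← h1s', ← h2s', ← h1i', ← h2i']; exact h'
  refine ⟨?_, ?_, ?_, ?_⟩
  · rw [sup_sup_sup_comm a₁ a₂ b₁ b₂, h1s, h2s, sup_sup_sup_comm]
  · rw [sup_sup_sup_comm a₁ a₂ b₁ b₂, h1s', h2s', sup_sup_sup_comm]
  · rw [key a₁ b₁ a₂ b₂ h', key a₁ c₁ a₂ c₂ hac, h1i, h2i]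
  · rw [key a₁ b₁ a₂ b₂ h', key b₁ c₁ b₂ c₂ hbc, h1i', h2i']
end

section
/- In a complemented modular lattice, elements a and b are perspective (have a common complement) if and only if x and y are perspective for some (equivalently, every) pair x, y with a = x ⊕ (a ∧ b) and b = y ⊕ (a ∧ b); moreover, for such x, y one has a ⊕ y = a ∨ b = b ⊕ x. -/
/-- `a` and `b` are perspective: they have a common complement. -/
def Persp {α : Type*} [Lattice α] [BoundedOrder α] (a b : α) : Prop :=
  ∃ c, IsCompl a c ∧ IsCompl b c

section Aux
variable {α : Type*} [Lattice α] [BoundedOrder α] [IsModularLattice α]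

/-- If `u ⊓ v = ⊥` and `(u ⊔ v) ⊓ w = ⊥` then `u ⊓ (v ⊔ w) = ⊥`. -/
lemma aux_inf_bot {u v w : α} (h1 : u ⊓ v = ⊥) (h2 : (u ⊔ v) ⊓ w = ⊥) :
    u ⊓ (v ⊔ w) = ⊥ := by
  have hv : (v ⊔ w) ⊓ (u ⊔ v) = v := by
    rw [sup_inf_assoc_of_le w le_sup_right, inf_comm w, h2, sup_bot_eq]
  have h3 : u ⊓ (v ⊔ w) ≤ v := by
    calc u ⊓ (v ⊔ w) ≤ (u ⊔ v) ⊓ (v ⊔ w) := inf_le_inf_right _ le_sup_left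
    _ = v := by rw [inf_comm]; exact hv
  exact le_antisymm (le_trans (le_inf inf_le_left h3) h1.le) bot_le

/-- Forward direction: a common complement `c` of `a, b` yields the common
complement `c ⊔ (a ⊓ b)` of `x, y`. -/
lemma persp_forward {a b x y : α}
    (hP : Persp a b)
    (hax : a = x ⊔ (a ⊓ b)) (hx : x ⊓ (a ⊓ b) = ⊥)
    (hby : b = y ⊔ (a ⊓ b)) (hy : y ⊓ (a ⊓ b) = ⊥) :
    Persp x y := by
  obtain ⟨c, hac, hbc⟩ := hP
  set d := a ⊓ b with hd
  have hxa : x ≤ a := hax ▸ le_sup_left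
  have hyb : y ≤ b := hby ▸ le_sup_left
  refine ⟨c ⊔ d, ?_, ?_⟩
  · constructor
    · rw [disjoint_iff]
      have h1 : a ⊓ (c ⊔ d) = d := by
        rw [sup_comm c d, inf_comm, sup_inf_assoc_of_le c inf_le_left,
          inf_comm c a, hac.inf_eq_bot, sup_bot_eq]
      have h2 : x ⊓ (c ⊔ d) ≤ d := by
        calc x ⊓ (c ⊔ d) ≤ a ⊓ (c ⊔ d) := inf_le_inf_right _ hxa
        _ = d := h1
      exact le_antisymm (le_trans (le_inf inf_le_left h2) hx.le) bot_le
    · rw [codisjoint_iff]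
      calc x ⊔ (c ⊔ d) = (x ⊔ d) ⊔ c := by rw [sup_comm c d, ← sup_assoc]
      _ = a ⊔ c := by rw [← hax]
      _ = ⊤ := hac.sup_eq_top
  · constructor
    · rw [disjoint_iff]
      have h1 : b ⊓ (c ⊔ d) = d := by
        rw [sup_comm c d, inf_comm, sup_inf_assoc_of_le c inf_le_right,
          inf_comm c b, hbc.inf_eq_bot, sup_bot_eq]
      have h2 : y ⊓ (c ⊔ d) ≤ d := by
        calc y ⊓ (c ⊔ d) ≤ b ⊓ (c ⊔ d) := inf_le_inf_right _ hyb
        _ = d := h1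
      exact le_antisymm (le_trans (le_inf inf_le_left h2) hy.le) bot_le
    · rw [codisjoint_iff]
      calc y ⊔ (c ⊔ d) = (y ⊔ d) ⊔ c := by rw [sup_comm c d, ← sup_assoc]
      _ = b ⊔ c := by rw [← hby]
      _ = ⊤ := hbc.sup_eq_top

end Aux

section Aux2
variable {α : Type*} [Lattice α] [BoundedOrder α] [IsModularLattice α]
  [ComplementedLattice α]

/-- Backward direction. -/
lemma persp_backward {a b x y : α}
    (hax : a = x ⊔ (a ⊓ b)) (hx : x ⊓ (a ⊓ b) = ⊥)
    (hby : b = y ⊔ (a ⊓ b)) (hy : y ⊓ (a ⊓ b) = ⊥)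
    (hP : Persp x y) : Persp a b := by
  obtain ⟨c, hxc, hyc⟩ := hP
  set d := a ⊓ b with hd
  have hxa : x ≤ a := hax ▸ le_sup_left
  have hyb : y ≤ b := hby ▸ le_sup_left
  have hya : y ⊓ a = ⊥ := by
    have h : y ⊓ a ≤ y ⊓ d :=
      le_inf inf_le_left (le_inf inf_le_right (le_trans inf_le_left hyb))
    exact le_antisymm (le_trans h hy.le) bot_le
  have hxb : x ⊓ b = ⊥ := by
    have h : x ⊓ b ≤ x ⊓ d :=
      le_inf inf_le_left (le_inf (le_trans inf_le_left hxa) inf_le_right)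
    exact le_antisymm (le_trans h hx.le) bot_le
  have hxya : (x ⊔ y) ⊓ a = x := by
    rw [sup_inf_assoc_of_le y hxa, hya, sup_bot_eq]
  have hxyb : (x ⊔ y) ⊓ b = y := by
    rw [sup_comm x y, sup_inf_assoc_of_le x hyb, hxb, sup_bot_eq]
  set c₀ := c ⊓ (x ⊔ y) with hc₀
  have hc₀le : c₀ ≤ x ⊔ y := inf_le_right
  have hxc₀sup : x ⊔ c₀ = x ⊔ y := by
    rw [hc₀, ← sup_inf_assoc_of_le c le_sup_left, hxc.sup_eq_top, top_inf_eq]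
  have hyc₀sup : y ⊔ c₀ = x ⊔ y := by
    rw [hc₀, ← sup_inf_assoc_of_le c le_sup_right, hyc.sup_eq_top, top_inf_eq]
  have hxc₀inf : x ⊓ c₀ = ⊥ := by
    have h : x ⊓ c₀ ≤ x ⊓ c := inf_le_inf_left _ inf_le_left
    exact le_antisymm (le_trans h hxc.inf_eq_bot.le) bot_le
  have hyc₀inf : y ⊓ c₀ = ⊥ := by
    have h : y ⊓ c₀ ≤ y ⊓ c := inf_le_inf_left _ inf_le_left
    exact le_antisymm (le_trans h hyc.inf_eq_bot.le) bot_le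
  have hac₀ : a ⊓ c₀ = ⊥ := by
    have h1 : a ⊓ c₀ ≤ x := by
      calc a ⊓ c₀ ≤ a ⊓ (x ⊔ y) := inf_le_inf_left _ hc₀le
      _ = x := by rw [inf_comm]; exact hxya
    have h2 : a ⊓ c₀ ≤ x ⊓ c₀ := le_inf h1 inf_le_right
    exact le_antisymm (le_trans h2 hxc₀inf.le) bot_le
  have hbc₀ : b ⊓ c₀ = ⊥ := by
    have h1 : b ⊓ c₀ ≤ y := by
      calc b ⊓ c₀ ≤ b ⊓ (x ⊔ y) := inf_le_inf_left _ hc₀le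
      _ = y := by rw [inf_comm]; exact hxyb
    have h2 : b ⊓ c₀ ≤ y ⊓ c₀ := le_inf h1 inf_le_right
    exact le_antisymm (le_trans h2 hyc₀inf.le) bot_le
  have hab : a ⊔ b = x ⊔ y ⊔ d := by
    rw [hax, hby, sup_assoc x d, sup_left_comm d y d, sup_idem, ← sup_assoc]
  have hac₀sup : a ⊔ c₀ = a ⊔ b := by
    calc a ⊔ c₀ = (x ⊔ c₀) ⊔ d := by rw [hax, sup_right_comm]
    _ = x ⊔ y ⊔ d := by rw [hxc₀sup]
    _ = a ⊔ b := hab.symm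
  have hbc₀sup : b ⊔ c₀ = a ⊔ b := by
    calc b ⊔ c₀ = (y ⊔ c₀) ⊔ d := by rw [hby, sup_right_comm]
    _ = x ⊔ y ⊔ d := by rw [hyc₀sup]
    _ = a ⊔ b := hab.symm
  obtain ⟨e, he⟩ := exists_isCompl (a ⊔ b)
  refine ⟨c₀ ⊔ e, ?_, ?_⟩
  · constructor
    · rw [disjoint_iff]
      refine aux_inf_bot hac₀ ?_
      rw [hac₀sup]; exact he.inf_eq_bot
    · rw [codisjoint_iff, ← sup_assoc, hac₀sup]
      exact he.sup_eq_top
  · constructor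
    · rw [disjoint_iff]
      refine aux_inf_bot hbc₀ ?_
      rw [hbc₀sup]; exact he.inf_eq_bot
    · rw [codisjoint_iff, ← sup_assoc, hbc₀sup]
      exact he.sup_eq_top

/-- Existence of a decomposition. -/
lemma persp_exists_decomp (a b : α) :
    ∃ x y : α, a = x ⊔ (a ⊓ b) ∧ x ⊓ (a ⊓ b) = ⊥ ∧ b = y ⊔ (a ⊓ b) ∧
      y ⊓ (a ⊓ b) = ⊥ := by
  obtain ⟨c, hc⟩ := exists_isCompl (a ⊓ b)
  refine ⟨a ⊓ c, b ⊓ c, ?_, ?_, ?_, ?_⟩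
  · rw [inf_sup_assoc_of_le c inf_le_left, sup_comm c, hc.sup_eq_top, inf_top_eq]
  · exact le_antisymm (le_trans (inf_le_inf_right _ inf_le_right)
      hc.symm.inf_eq_bot.le) bot_le
  · rw [inf_sup_assoc_of_le c inf_le_right, sup_comm c, hc.sup_eq_top, inf_top_eq]
  · exact le_antisymm (le_trans (inf_le_inf_right _ inf_le_right)
      hc.symm.inf_eq_bot.le) bot_le

end Aux2

/-- In a complemented modular lattice, `a ∼ b` iff `x ∼ y` for some
(equivalently, every) pair `x, y` with `a = x ⊕ (a ⊓ b)` and `b = y ⊕ (a ⊓ b)`;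
moreover, for such `x, y` one has `a ⊕ y = a ⊔ b = b ⊕ x`. -/
theorem stmt4 {α : Type*} [Lattice α] [BoundedOrder α] [IsModularLattice α]
    [ComplementedLattice α] (a b : α) :
    (Persp a b ↔ ∀ x y : α,
      a = x ⊔ (a ⊓ b) → x ⊓ (a ⊓ b) = ⊥ → b = y ⊔ (a ⊓ b) → y ⊓ (a ⊓ b) = ⊥ →
      Persp x y) ∧
    (Persp a b ↔ ∃ x y : α,
      a = x ⊔ (a ⊓ b) ∧ x ⊓ (a ⊓ b) = ⊥ ∧ b = y ⊔ (a ⊓ b) ∧ y ⊓ (a ⊓ b) = ⊥ ∧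
      Persp x y) ∧
    (∀ x y : α,
      a = x ⊔ (a ⊓ b) → x ⊓ (a ⊓ b) = ⊥ → b = y ⊔ (a ⊓ b) → y ⊓ (a ⊓ b) = ⊥ →
      a ⊔ y = a ⊔ b ∧ a ⊓ y = ⊥ ∧ b ⊔ x = a ⊔ b ∧ b ⊓ x = ⊥) := by
  refine ⟨⟨fun hP x y h1 h2 h3 h4 => persp_forward hP h1 h2 h3 h4, fun H => ?_⟩,
    ⟨fun hP => ?_, fun ⟨x, y, h1, h2, h3, h4, hxy⟩ => persp_backward h1 h2 h3 h4 hxy⟩,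
    fun x y h1 h2 h3 h4 => ?_⟩
  · obtain ⟨x, y, h1, h2, h3, h4⟩ := persp_exists_decomp a b
    exact persp_backward h1 h2 h3 h4 (H x y h1 h2 h3 h4)
  · obtain ⟨x, y, h1, h2, h3, h4⟩ := persp_exists_decomp a b
    exact ⟨x, y, h1, h2, h3, h4, persp_forward hP h1 h2 h3 h4⟩
  · have hxa : x ≤ a := h1 ▸ le_sup_left
    have hyb : y ≤ b := h3 ▸ le_sup_left
    refine ⟨?_, ?_, ?_, ?_⟩
    · conv_rhs => rw [h3]
      rw [← sup_assoc]
      exact (sup_eq_left.mpr (le_trans inf_le_left le_sup_left)).symm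
    · have h : a ⊓ y ≤ y ⊓ (a ⊓ b) :=
        le_inf inf_le_right (le_inf inf_le_left (le_trans inf_le_right hyb))
      exact le_antisymm (le_trans h h4.le) bot_le
    · rw [sup_comm a b]
      conv_rhs => rw [h1]
      rw [← sup_assoc]
      exact (sup_eq_left.mpr (le_trans inf_le_right le_sup_left)).symm
    · have h : b ⊓ x ≤ x ⊓ (a ⊓ b) :=
        le_inf inf_le_right (le_inf (le_trans inf_le_right hxa) inf_le_left)
      exact le_antisymm (le_trans h h2.le) bot_le
end

section
/- In a bounded modular lattice, if z = x ⊕ y, w = u ⊕ v, and z ∧ w = x ∧ u, then y ∧ v = 0; moreover (y ∨ v) ∧ (x ∨ u) = 0. -/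
/-- In a bounded modular lattice, if `z = x ⊕ y`, `w = u ⊕ v`, and
`z ⊓ w = x ⊓ u`, then `y ⊓ v = ⊥`; moreover `(y ⊔ v) ⊓ (x ⊔ u) = ⊥`. -/
theorem stmt5 {α : Type*} [Lattice α] [BoundedOrder α] [IsModularLattice α]
    (x y z u v w : α)
    (hz : z = x ⊔ y) (hxy : x ⊓ y = ⊥)
    (hw : w = u ⊔ v) (huv : u ⊓ v = ⊥)
    (h : z ⊓ w = x ⊓ u) :
    y ⊓ v = ⊥ ∧ (y ⊔ v) ⊓ (x ⊔ u) = ⊥ := by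
  have hyz : y ≤ z := hz ▸ le_sup_right
  have hxz : x ≤ z := hz ▸ le_sup_left
  have hvw : v ≤ w := hw ▸ le_sup_right
  have huw : u ≤ w := hw ▸ le_sup_left
  -- first part
  have hyv : y ⊓ v = ⊥ := by
    have h1 : y ⊓ v ≤ x := le_trans (le_inf (inf_le_of_left_le hyz)
      (inf_le_of_right_le hvw)) (h ▸ inf_le_left)
    exact le_bot_iff.mp (hxy ▸ le_inf h1 inf_le_left)
  refine ⟨hyv, ?_⟩
  -- v ⊓ z = ⊥
  have hvz : v ⊓ z = ⊥ := by
    have h1 : v ⊓ z ≤ u :=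
      calc v ⊓ z ≤ w ⊓ z := inf_le_inf_right z hvw
        _ = x ⊓ u := by rw [inf_comm, h]
        _ ≤ u := inf_le_right
    exact le_bot_iff.mp (huv ▸ le_inf h1 inf_le_left)
  -- z ⊓ (y ⊔ v) = y
  have hzyv : z ⊓ (y ⊔ v) = y := by
    rw [inf_comm, sup_inf_assoc_of_le v hyz, hvz, sup_bot_eq]
  -- x ⊓ (y ⊔ v) = ⊥
  have hxyv : x ⊓ (y ⊔ v) = ⊥ := by
    have h1 : x ⊓ (y ⊔ v) ≤ y :=
      le_trans (inf_le_inf_right _ hxz) (le_of_eq hzyv)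
    exact le_bot_iff.mp (hxy ▸ le_inf inf_le_left h1)
  -- u ⊓ (z ⊔ v) ≤ x ⊓ u
  have hu1 : u ⊓ (z ⊔ v) ≤ x ⊓ u := by
    have h1 : w ⊓ (z ⊔ v) = v ⊔ z ⊓ w := by
      rw [inf_comm, sup_comm, sup_inf_assoc_of_le z hvw]
    have h2 : u ⊓ (z ⊔ v) ≤ u ⊓ (v ⊔ x ⊓ u) := by
      refine le_inf inf_le_left ?_
      calc u ⊓ (z ⊔ v) ≤ w ⊓ (z ⊔ v) := inf_le_inf_right _ huw
        _ = v ⊔ x ⊓ u := by rw [h1, h]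
    have h3 : u ⊓ (v ⊔ x ⊓ u) = x ⊓ u := by
      rw [inf_comm, sup_comm, sup_inf_assoc_of_le v (inf_le_right : x ⊓ u ≤ u),
        inf_comm v u, huv, sup_bot_eq]
    exact h3 ▸ h2
  -- (y ⊔ v) ⊓ (x ⊔ u) ≤ x
  have key : (y ⊔ v) ⊓ (x ⊔ u) ≤ x := by
    have h1 : x ⊔ (y ⊔ v) ⊓ (x ⊔ u) = (x ⊔ (y ⊔ v)) ⊓ (x ⊔ u) :=
      (sup_inf_assoc_of_le (y ⊔ v) (le_sup_left : x ≤ x ⊔ u)).symm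
    have h2 : (x ⊔ (y ⊔ v)) ⊓ (x ⊔ u) = x ⊔ u ⊓ (x ⊔ (y ⊔ v)) := by
      rw [inf_comm]
      exact sup_inf_assoc_of_le u (le_sup_left : x ≤ x ⊔ (y ⊔ v))
    have h3 : x ⊔ (y ⊔ v) = z ⊔ v := by rw [hz, sup_assoc]
    have h4 : u ⊓ (x ⊔ (y ⊔ v)) ≤ x := by
      rw [h3]; exact le_trans hu1 inf_le_left
    calc (y ⊔ v) ⊓ (x ⊔ u) ≤ x ⊔ (y ⊔ v) ⊓ (x ⊔ u) := le_sup_right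
      _ = x ⊔ u ⊓ (x ⊔ (y ⊔ v)) := by rw [h1, h2]
      _ ≤ x := sup_le le_rfl h4
  have hle : (y ⊔ v) ⊓ (x ⊔ u) ≤ x ⊓ (y ⊔ v) := le_inf key inf_le_left
  exact le_bot_iff.mp (hxyv ▸ hle)
end

section
/- In a modular lattice, if u is a neutral element (i.e. (u ∨ x) ∧ (u ∨ y) = u ∨ (x ∧ y) for all x, y) and a ∼_c b, then a ∨ u ∼_{c ∨ u} b ∨ u. -/
/-- In a modular lattice, if `u` is neutral and `a ∼_c b`, then
`a ⊔ u ∼_{c ⊔ u} b ⊔ u`. -/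
theorem stmt8 {α : Type*} [Lattice α] [IsModularLattice α] (a b c u : α)
    (hu : ∀ x y : α, (u ⊔ x) ⊓ (u ⊔ y) = u ⊔ (x ⊓ y))
    (hab : PerspVia a b c) :
    PerspVia (a ⊔ u) (b ⊔ u) (c ⊔ u) := by
  obtain ⟨h1, h2, h3, h4⟩ := hab
  refine ⟨?_, ?_, ?_, ?_⟩
  · calc (a ⊔ u) ⊔ (b ⊔ u) = (a ⊔ b) ⊔ u := by
          rw [sup_sup_sup_comm, sup_idem]
      _ = (a ⊔ c) ⊔ u := by rw [h1]
      _ = (a ⊔ u) ⊔ (c ⊔ u) := by rw [sup_sup_sup_comm, sup_idem]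
  · calc (a ⊔ u) ⊔ (b ⊔ u) = (a ⊔ b) ⊔ u := by
          rw [sup_sup_sup_comm, sup_idem]
      _ = (b ⊔ c) ⊔ u := by rw [h2]
      _ = (b ⊔ u) ⊔ (c ⊔ u) := by rw [sup_sup_sup_comm, sup_idem]
  · calc (a ⊔ u) ⊓ (b ⊔ u) = (u ⊔ a) ⊓ (u ⊔ b) := by rw [sup_comm a u, sup_comm b u]
      _ = u ⊔ (a ⊓ b) := hu a b
      _ = u ⊔ (a ⊓ c) := by rw [h3]
      _ = (u ⊔ a) ⊓ (u ⊔ c) := (hu a c).symm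
      _ = (a ⊔ u) ⊓ (c ⊔ u) := by rw [sup_comm a u, sup_comm c u]
  · calc (a ⊔ u) ⊓ (b ⊔ u) = (u ⊔ a) ⊓ (u ⊔ b) := by rw [sup_comm a u, sup_comm b u]
      _ = u ⊔ (a ⊓ b) := hu a b
      _ = u ⊔ (b ⊓ c) := by rw [h4]
      _ = (u ⊔ b) ⊓ (u ⊔ c) := (hu b c).symm
      _ = (b ⊔ u) ⊓ (c ⊔ u) := by rw [sup_comm b u, sup_comm c u]
end

section
/- Let α : [0,e] → [0,f] be a lattice isomorphism between lower sections of a complemented modular lattice and let g = e ∧ f. Then α⁻¹(g) ∧ α(g) ≤ g, and equality α⁻¹(g) ∧ α(g) = g holds if and only if α(g) = g. -/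
theorem OrderIso.coe_symm_apply_inf_coe_apply_eq_iff {L : Type*} [SemilatticeInf L]
    {s t : Set L} (α : s ≃o t) {x : s} {y : t} (hxy : (x : L) = y) :
    (α.symm y : L) ⊓ α x = x ↔ (α x : L) = x := by
  constructor
  · intro h
    have hx_le : x ≤ α.symm y := by
      change (x : L) ≤ α.symm y
      exact h ▸ inf_le_left
    have hαx_le : α x ≤ y := α.le_symm_apply.mp hx_le
    exact le_antisymm (hxy ▸ hαx_le) (h ▸ inf_le_right)
  · intro h
    have hαx : α x = y := Subtype.ext (h.trans hxy)
    rw [← hαx, α.symm_apply_apply, h, inf_idem]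

theorem stmt9_general {L : Type*} [Lattice L] [BoundedOrder L] (e f : L)
    (α : Set.Icc (⊥ : L) e ≃o Set.Icc (⊥ : L) f) :
    (↑(α.symm ⟨e ⊓ f, bot_le, inf_le_right⟩) : L) ⊓ ↑(α ⟨e ⊓ f, bot_le, inf_le_left⟩)
      ≤ e ⊓ f ∧
    ((↑(α.symm ⟨e ⊓ f, bot_le, inf_le_right⟩) : L) ⊓ ↑(α ⟨e ⊓ f, bot_le, inf_le_left⟩)
      = e ⊓ f ↔ (↑(α ⟨e ⊓ f, bot_le, inf_le_left⟩) : L) = e ⊓ f) :=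
  ⟨inf_le_inf (α.symm _).2.2 (α _).2.2, α.coe_symm_apply_inf_coe_apply_eq_iff rfl⟩

/-- For a lattice isomorphism `α : [0,e] → [0,f]` between lower sections
of a complemented modular lattice and `g = e ⊓ f`, one has `α⁻¹(g) ⊓ α(g) ≤ g`, with
equality if and only if `α(g) = g`. -/
theorem stmt9 {L : Type*} [Lattice L] [BoundedOrder L] [IsModularLattice L]
    [ComplementedLattice L] (e f : L)
    (α : Set.Icc (⊥ : L) e ≃o Set.Icc (⊥ : L) f) :
    (↑(α.symm ⟨e ⊓ f, bot_le, inf_le_right⟩) : L) ⊓ ↑(α ⟨e ⊓ f, bot_le, inf_le_left⟩)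
      ≤ e ⊓ f ∧
    ((↑(α.symm ⟨e ⊓ f, bot_le, inf_le_right⟩) : L) ⊓ ↑(α ⟨e ⊓ f, bot_le, inf_le_left⟩)
      = e ⊓ f ↔ (↑(α ⟨e ⊓ f, bot_le, inf_le_left⟩) : L) = e ⊓ f) :=
  stmt9_general e f α
end

section
/- In a bounded modular lattice, if a₀ ∨ b₀, a₁ ∨ b₁, …, a_m ∨ b_m is an independent sequence and aₙ ≈ bₙ for all n ≤ m, then Σ_{n≤m} aₙ ≈ Σ_{n≤m} bₙ. -/
/-- `a ≈ b`: `a` and `b` are perspective with `a ⊓ b = ⊥` via an axis `c` with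
`a ⊓ c = b ⊓ c = ⊥`. -/
def BPersp {L : Type*} [Lattice L] [OrderBot L] (a b : L) : Prop :=
  a ⊓ b = ⊥ ∧ ∃ c, a ⊔ b = a ⊔ c ∧ a ⊔ b = b ⊔ c ∧ a ⊓ c = ⊥ ∧ b ⊓ c = ⊥

section Aux

variable {L : Type*} [Lattice L] [BoundedOrder L] [IsModularLattice L]

private lemma minikey {p q r : L} (hq : q ≤ r) (hpr : p ⊓ r = ⊥) :
    (p ⊔ q) ⊓ r = q := by
  rw [sup_comm, sup_inf_assoc_of_le p hq, hpr, sup_bot_eq]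

/-- Key lemma: for an independent pair `d, e`, meets distribute over componentwise joins. -/
private lemma key_s13 {d e : L} (hde : d ⊓ e = ⊥) {x y u v : L}
    (hx : x ≤ d) (hu : u ≤ d) (hy : y ≤ e) (hv : v ≤ e) :
    (x ⊔ y) ⊓ (u ⊔ v) = (x ⊓ u) ⊔ (y ⊓ v) := by
  have hed : e ⊓ d = ⊥ := by rw [inf_comm]; exact hde
  have hxe : (e ⊔ x) ⊓ d = x := minikey hx hed
  have hyd : (x ⊔ y) ⊓ e = y :=
    minikey hy (le_antisymm (le_trans (inf_le_inf_right e hx) hde.le) bot_le)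
  -- u ⊓ (x ⊔ e) = u ⊓ x
  have hux : u ⊓ (x ⊔ e) = u ⊓ x := by
    have : u ⊓ (x ⊔ e) = u ⊓ ((x ⊔ e) ⊓ d) := by
      rw [inf_comm (x ⊔ e) d, ← inf_assoc, inf_eq_left.2 hu]
    rw [this, sup_comm x e, hxe]
  -- (u ⊔ v) ⊓ (x ⊔ e) = (u ⊓ x) ⊔ v
  have step1 : (u ⊔ v) ⊓ (x ⊔ e) = (u ⊓ x) ⊔ v := by
    rw [sup_comm u v, sup_inf_assoc_of_le u (le_trans hv le_sup_right), hux, sup_comm]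
  have hle : x ⊔ y ≤ x ⊔ e := sup_le_sup_left hy x
  have step2 : (x ⊔ y) ⊓ (u ⊔ v) = (x ⊔ y) ⊓ ((u ⊓ x) ⊔ v) := by
    calc (x ⊔ y) ⊓ (u ⊔ v) = (x ⊔ y) ⊓ ((x ⊔ e) ⊓ (u ⊔ v)) := by
          rw [← inf_assoc, inf_eq_left.2 hle]
      _ = (x ⊔ y) ⊓ ((u ⊔ v) ⊓ (x ⊔ e)) := by rw [inf_comm (x ⊔ e)]
      _ = (x ⊔ y) ⊓ ((u ⊓ x) ⊔ v) := by rw [step1]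
  -- v ⊓ (x ⊔ y) = v ⊓ y
  have hvy : v ⊓ (x ⊔ y) = v ⊓ y := by
    have : v ⊓ (x ⊔ y) = v ⊓ ((x ⊔ y) ⊓ e) := by
      rw [inf_comm (x ⊔ y) e, ← inf_assoc, inf_eq_left.2 hv]
    rw [this, hyd]
  rw [step2, inf_comm,
    sup_inf_assoc_of_le v (le_trans inf_le_right le_sup_left), hvy, inf_comm v y,
    inf_comm u x, inf_comm y v]

private lemma sup_range_succ' (n : ℕ) (f : ℕ → L) :
    (Finset.range (n + 1)).sup f = f 0 ⊔ (Finset.range n).sup fun k => f (k + 1) := by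
  induction n with
  | zero => simp
  | succ n ih =>
    rw [Finset.range_add_one, Finset.sup_insert, ih, Finset.range_add_one, Finset.sup_insert]
    rw [sup_comm (f (n + 1)), sup_assoc, sup_comm (f (n + 1))]

private lemma sup_shift_Ioc (n m : ℕ) (f : ℕ → L) :
    ((Finset.Ioc n m).sup fun k => f (k + 1)) = (Finset.Ioc (n + 1) (m + 1)).sup f := by
  have himg : Finset.Ioc (n + 1) (m + 1) = (Finset.Ioc n m).image (· + 1) := by
    ext x
    simp only [Finset.mem_image, Finset.mem_Ioc]
    constructor
    · intro hx; exact ⟨x - 1, by omega, by omega⟩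
    · rintro ⟨y, hy, rfl⟩; omega
  rw [himg, Finset.sup_image]
  rfl

private lemma sup_range_eq_Ioc (m : ℕ) (f : ℕ → L) :
    ((Finset.range (m + 1)).sup fun k => f (k + 1)) = (Finset.Ioc 0 (m + 1)).sup f := by
  have himg : Finset.Ioc 0 (m + 1) = (Finset.range (m + 1)).image (· + 1) := by
    ext x
    simp only [Finset.mem_image, Finset.mem_range, Finset.mem_Ioc]
    constructor
    · intro hx; exact ⟨x - 1, by omega, by omega⟩
    · rintro ⟨y, hy, rfl⟩; omega
  rw [himg, Finset.sup_image]
  rfl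

end Aux

/-- In a bounded modular lattice, if `a₀ ⊔ b₀, …, a_m ⊔ b_m` is an
independent sequence and `aₙ ≈ bₙ` for all `n ≤ m`, then `⨆_{n ≤ m} aₙ ≈ ⨆_{n ≤ m} bₙ`. -/
theorem stmt13 {L : Type*} [Lattice L] [BoundedOrder L] [IsModularLattice L]
    (m : ℕ) (a b : ℕ → L)
    (hind : ∀ n < m, (a n ⊔ b n) ⊓ ((Finset.Ioc n m).sup fun k => a k ⊔ b k) = ⊥)
    (hp : ∀ n ≤ m, BPersp (a n) (b n)) :
    BPersp ((Finset.range (m + 1)).sup a) ((Finset.range (m + 1)).sup b) := by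
  induction m generalizing a b with
  | zero =>
    simpa using hp 0 le_rfl
  | succ m ih =>
    -- shifted sequences
    have IH : BPersp ((Finset.range (m + 1)).sup fun n => a (n + 1))
        ((Finset.range (m + 1)).sup fun n => b (n + 1)) := by
      refine ih (fun n => a (n + 1)) (fun n => b (n + 1)) ?_ ?_
      · intro n hn
        show (a (n + 1) ⊔ b (n + 1)) ⊓
          ((Finset.Ioc n m).sup fun k => a (k + 1) ⊔ b (k + 1)) = ⊥
        rw [sup_shift_Ioc n m fun k => a k ⊔ b k]
        exact hind (n + 1) (by omega)
      · intro n hn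
        exact hp (n + 1) (by omega)
    obtain ⟨hAB', C', hAC', hBC', hAcap', hBcap'⟩ := IH
    obtain ⟨hab0, c0, hac0, hbc0, hacap0, hbcap0⟩ := hp 0 (by omega)
    set A' : L := (Finset.range (m + 1)).sup fun n => a (n + 1) with hA'
    set B' : L := (Finset.range (m + 1)).sup fun n => b (n + 1) with hB'
    have hind0 : (a 0 ⊔ b 0) ⊓ (Finset.Ioc 0 (m + 1)).sup (fun k => a k ⊔ b k) = ⊥ :=
      hind 0 (by omega)
    have hA'le : A' ≤ (Finset.Ioc 0 (m + 1)).sup (fun k => a k ⊔ b k) := by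
      refine Finset.sup_le fun n hn => ?_
      have hn' : n < m + 1 := Finset.mem_range.mp hn
      refine le_trans (le_sup_left : a (n + 1) ≤ a (n + 1) ⊔ b (n + 1)) ?_
      have hmem : n + 1 ∈ Finset.Ioc 0 (m + 1) := Finset.mem_Ioc.mpr ⟨by omega, by omega⟩
      exact Finset.le_sup (f := fun k => a k ⊔ b k) hmem
    have hB'le : B' ≤ (Finset.Ioc 0 (m + 1)).sup (fun k => a k ⊔ b k) := by
      refine Finset.sup_le fun n hn => ?_
      have hn' : n < m + 1 := Finset.mem_range.mp hn
      refine le_trans (le_sup_right : b (n + 1) ≤ a (n + 1) ⊔ b (n + 1)) ?_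
      have hmem : n + 1 ∈ Finset.Ioc 0 (m + 1) := Finset.mem_Ioc.mpr ⟨by omega, by omega⟩
      exact Finset.le_sup (f := fun k => a k ⊔ b k) hmem
    have hC'le : C' ≤ (Finset.Ioc 0 (m + 1)).sup (fun k => a k ⊔ b k) := by
      have : C' ≤ A' ⊔ B' := by rw [hAC']; exact le_sup_right
      exact le_trans this (sup_le hA'le hB'le)
    have ha0 : a 0 ≤ a 0 ⊔ b 0 := le_sup_left
    have hb0 : b 0 ≤ a 0 ⊔ b 0 := le_sup_right
    have hc0 : c0 ≤ a 0 ⊔ b 0 := by rw [hac0]; exact le_sup_right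
    have hsa : (Finset.range (m + 2)).sup a = a 0 ⊔ A' := sup_range_succ' (m + 1) a
    have hsb : (Finset.range (m + 2)).sup b = b 0 ⊔ B' := sup_range_succ' (m + 1) b
    rw [hsa, hsb]
    refine ⟨?_, c0 ⊔ C', ?_, ?_, ?_, ?_⟩
    · rw [key_s13 hind0 ha0 hb0 hA'le hB'le, hab0, hAB', sup_idem]
    · rw [sup_sup_sup_comm (a 0) A' (b 0) B', sup_sup_sup_comm (a 0) A' c0 C',
        ← hac0, ← hAC']
    · rw [sup_sup_sup_comm (a 0) A' (b 0) B', sup_sup_sup_comm (b 0) B' c0 C',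
        ← hbc0, ← hBC']
    · rw [key_s13 hind0 ha0 hc0 hA'le hC'le, hacap0, hAcap', sup_idem]
    · rw [key_s13 hind0 hb0 hc0 hB'le hC'le, hbcap0, hBcap', sup_idem]
end

section
/- In an ℵ₀-complete complemented modular lattice, if the sequence a₀ ∨ b₀, a₁ ∨ b₁, … is independent and aₙ ≈ bₙ for all n < ω, then sup_n aₙ ≈ sup_n bₙ. -/
section Aux

variable {L : Type*} [Lattice L] [OrderBot L] [IsModularLattice L]

/-- Key modular lemma: if `u ⊓ v = ⊥` then meets distribute across the
independent decomposition. -/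
lemma bpersp_key_inf {u v x y p q : L} (huv : u ⊓ v = ⊥) (hx : x ≤ u) (hy : y ≤ u)
    (hp : p ≤ v) (hq : q ≤ v) : (x ⊔ p) ⊓ (y ⊔ q) = (x ⊓ y) ⊔ (p ⊓ q) := by
  have hvu : v ⊓ u = ⊥ := by rw [inf_comm]; exact huv
  -- for x' y' ≤ u : x' ⊓ (y' ⊔ v) = x' ⊓ y'
  have h1 : ∀ x' y' : L, x' ≤ u → y' ≤ u → x' ⊓ (y' ⊔ v) = x' ⊓ y' := by
    intro x' y' hx' hy'
    have hu : u ⊓ (y' ⊔ v) = y' := by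
      rw [inf_comm, sup_inf_assoc_of_le v hy', hvu, sup_bot_eq]
    calc x' ⊓ (y' ⊔ v) = (x' ⊓ u) ⊓ (y' ⊔ v) := by rw [inf_eq_left.mpr hx']
      _ = x' ⊓ (u ⊓ (y' ⊔ v)) := by rw [inf_assoc]
      _ = x' ⊓ y' := by rw [hu]
  have h1' : ∀ p' q' : L, p' ≤ v → q' ≤ v → p' ⊓ (q' ⊔ u) = p' ⊓ q' := by
    intro p' q' hp' hq'
    have hv : v ⊓ (q' ⊔ u) = q' := by
      rw [inf_comm, sup_inf_assoc_of_le u hq', huv, sup_bot_eq]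
    calc p' ⊓ (q' ⊔ u) = (p' ⊓ v) ⊓ (q' ⊔ u) := by rw [inf_eq_left.mpr hp']
      _ = p' ⊓ (v ⊓ (q' ⊔ u)) := by rw [inf_assoc]
      _ = p' ⊓ q' := by rw [hv]
  apply le_antisymm
  · have e1 : (x ⊔ p) ⊓ (y ⊔ q) ≤ v ⊔ (x ⊓ y) := by
      calc (x ⊔ p) ⊓ (y ⊔ q) ≤ (v ⊔ x) ⊓ (y ⊔ v) :=
            inf_le_inf (sup_le le_sup_right (hp.trans le_sup_left))
              (sup_le_sup le_rfl hq)
        _ = v ⊔ (x ⊓ (y ⊔ v)) := sup_inf_assoc_of_le x le_sup_right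
        _ = v ⊔ (x ⊓ y) := by rw [h1 x y hx hy]
    have e2 : (x ⊔ p) ⊓ (y ⊔ q) ≤ u ⊔ (p ⊓ q) := by
      calc (x ⊔ p) ⊓ (y ⊔ q) ≤ (u ⊔ p) ⊓ (q ⊔ u) :=
            inf_le_inf (sup_le_sup hx le_rfl)
              (by rw [sup_comm]; exact sup_le_sup le_rfl hy)
        _ = (p ⊔ u) ⊓ (q ⊔ u) := by rw [sup_comm u p]
        _ = u ⊔ (p ⊓ (q ⊔ u)) := by
            rw [sup_comm p u]; exact sup_inf_assoc_of_le p le_sup_right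
        _ = u ⊔ (p ⊓ q) := by rw [h1' p q hp hq]
    have e3 : (v ⊔ (x ⊓ y)) ⊓ (u ⊔ (p ⊓ q)) = (p ⊓ q) ⊔ (x ⊓ y) := by
      have hr : x ⊓ y ≤ u := le_trans inf_le_left hx
      have hs : p ⊓ q ≤ v := le_trans inf_le_left hp
      have hu2 : u ⊓ ((x ⊓ y) ⊔ v) = x ⊓ y := by
        rw [inf_comm, sup_inf_assoc_of_le v hr, hvu, sup_bot_eq]
      calc (v ⊔ (x ⊓ y)) ⊓ (u ⊔ (p ⊓ q))
          = ((p ⊓ q) ⊔ u) ⊓ ((x ⊓ y) ⊔ v) := by rw [inf_comm, sup_comm u, sup_comm v]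
        _ = (p ⊓ q) ⊔ (u ⊓ ((x ⊓ y) ⊔ v)) :=
            sup_inf_assoc_of_le u (le_trans hs le_sup_right)
        _ = (p ⊓ q) ⊔ (x ⊓ y) := by rw [hu2]
    calc (x ⊔ p) ⊓ (y ⊔ q) ≤ (v ⊔ (x ⊓ y)) ⊓ (u ⊔ (p ⊓ q)) := le_inf e1 e2
      _ = (p ⊓ q) ⊔ (x ⊓ y) := e3
      _ = (x ⊓ y) ⊔ (p ⊓ q) := sup_comm _ _
  · exact sup_le (le_inf (le_trans inf_le_left le_sup_left)
      (le_trans inf_le_right le_sup_left))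
      (le_inf (le_trans inf_le_left le_sup_right) (le_trans inf_le_right le_sup_right))

/-- Finite independence lemma. -/
lemma bpersp_fin_meet (u x y : ℕ → L)
    (hx : ∀ n, x n ≤ u n) (hy : ∀ n, y n ≤ u n) (hxy : ∀ n, x n ⊓ y n = ⊥)
    (hind : ∀ n m : ℕ, n < m → u n ⊓ (Finset.Ioc n m).sup u = ⊥) :
    ∀ d n : ℕ, ((Finset.Icc n (n + d)).sup x) ⊓ ((Finset.Icc n (n + d)).sup y) = ⊥ := by
  intro d
  induction d with
  | zero =>
    intro n
    simp only [Nat.add_zero, Finset.Icc_self, Finset.sup_singleton]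
    exact hxy n
  | succ d ih =>
    intro n
    have hnm : n < n + (d + 1) := by omega
    have hsplit : Finset.Icc n (n + (d + 1)) =
        Finset.cons n (Finset.Ioc n (n + (d + 1))) (by simp) :=
      Finset.Icc_eq_cons_Ioc (by omega)
    have hIoc : Finset.Ioc n (n + (d + 1)) = Finset.Icc (n + 1) ((n + 1) + d) := by
      rw [← Finset.Icc_add_one_left_eq_Ioc]
      congr 1
      omega
    have hX' : (Finset.Ioc n (n + (d + 1))).sup x ≤ (Finset.Ioc n (n + (d + 1))).sup u :=
      Finset.sup_mono_fun fun k _ => hx k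
    have hY' : (Finset.Ioc n (n + (d + 1))).sup y ≤ (Finset.Ioc n (n + (d + 1))).sup u :=
      Finset.sup_mono_fun fun k _ => hy k
    have hkey := bpersp_key_inf (hind n (n + (d + 1)) hnm) (hx n) (hy n) hX' hY'
    rw [hsplit, Finset.sup_cons, Finset.sup_cons, hkey, hxy n, bot_sup_eq, hIoc]
    exact ih (n + 1)

end Aux

section CSup

variable {L : Type*} [Lattice L] [BoundedOrder L] [IsModularLattice L]

lemma bpersp_csup_meet_bot (csup : (ℕ → L) → L)
    (h_ub : ∀ s : ℕ → L, ∀ n, s n ≤ csup s)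
    (h_lub : ∀ s : ℕ → L, ∀ x, (∀ n, s n ≤ x) → csup s ≤ x)
    (h_cont : ∀ s : ℕ → L, Monotone s → ∀ x : L, x ⊓ csup s = csup fun n => x ⊓ s n)
    (u x y : ℕ → L)
    (hx : ∀ n, x n ≤ u n) (hy : ∀ n, y n ≤ u n) (hxy : ∀ n, x n ⊓ y n = ⊥)
    (hind : ∀ n m : ℕ, n < m → u n ⊓ (Finset.Ioc n m).sup u = ⊥) :
    csup x ⊓ csup y = ⊥ := by
  have csup_bot : ∀ s : ℕ → L, (∀ n, s n = ⊥) → csup s = ⊥ := fun s hs =>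
    le_antisymm (h_lub s ⊥ fun n => (hs n).le) bot_le
  set X : ℕ → L := fun n => (Finset.Icc 0 n).sup x with hXdef
  set Y : ℕ → L := fun n => (Finset.Icc 0 n).sup y with hYdef
  have monoX : Monotone X := fun m n h =>
    Finset.sup_mono (Finset.Icc_subset_Icc_right h)
  have monoY : Monotone Y := fun m n h =>
    Finset.sup_mono (Finset.Icc_subset_Icc_right h)
  have hXeq : csup X = csup x :=
    le_antisymm (h_lub X _ fun n => Finset.sup_le fun k _ => h_ub x k)
      (h_lub x _ fun n => le_trans (Finset.le_sup (by simp) : x n ≤ X n) (h_ub X n))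
  have hYeq : csup Y = csup y :=
    le_antisymm (h_lub Y _ fun n => Finset.sup_le fun k _ => h_ub y k)
      (h_lub y _ fun n => le_trans (Finset.le_sup (by simp) : y n ≤ Y n) (h_ub Y n))
  have hfin : ∀ m n : ℕ, X m ⊓ Y n = ⊥ := by
    intro m n
    set N := max m n with hN
    have h1 : X m ≤ X N := monoX (le_max_left m n)
    have h2 : Y n ≤ Y N := monoY (le_max_right m n)
    have h3 : X N ⊓ Y N = ⊥ := by
      have := bpersp_fin_meet u x y hx hy hxy hind N 0
      simpa using this
    exact le_bot_iff.mp (le_trans (inf_le_inf h1 h2) h3.le)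
  have step : ∀ n, csup x ⊓ Y n = ⊥ := by
    intro n
    rw [← hXeq, inf_comm, h_cont X monoX (Y n)]
    exact csup_bot _ fun m => by rw [inf_comm]; exact hfin m n
  calc csup x ⊓ csup y = csup x ⊓ csup Y := by rw [hYeq]
    _ = csup fun n => csup x ⊓ Y n := h_cont Y monoY (csup x)
    _ = ⊥ := csup_bot _ step

end CSup

/-- In an ℵ₀-complete complemented modular lattice (which is
ℵ₀-continuous by Amemiya–Halperin; here countable suprema are given by `csup`
and ℵ₀-continuity is a hypothesis), if `a₀ ⊔ b₀, a₁ ⊔ b₁, …` is an independent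
sequence and `aₙ ≈ bₙ` for all `n`, then `sup_n aₙ ≈ sup_n bₙ`. -/
theorem stmt14 {L : Type*} [Lattice L] [BoundedOrder L] [IsModularLattice L]
    [ComplementedLattice L]
    (csup : (ℕ → L) → L)
    (h_ub : ∀ s : ℕ → L, ∀ n, s n ≤ csup s)
    (h_lub : ∀ s : ℕ → L, ∀ x, (∀ n, s n ≤ x) → csup s ≤ x)
    (h_cont : ∀ s : ℕ → L, Monotone s → ∀ x : L, x ⊓ csup s = csup fun n => x ⊓ s n)
    (a b : ℕ → L)
    (hind : ∀ n m : ℕ, n < m →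
      (a n ⊔ b n) ⊓ ((Finset.Ioc n m).sup fun k => a k ⊔ b k) = ⊥)
    (hp : ∀ n, BPersp (a n) (b n)) :
    BPersp (csup a) (csup b) := by
  have hab : ∀ n, a n ⊓ b n = ⊥ := fun n => (hp n).1
  choose c h1 h2 h3 h4 using fun n => (hp n).2
  set u : ℕ → L := fun n => a n ⊔ b n with hu
  have hau : ∀ n, a n ≤ u n := fun n => le_sup_left
  have hbu : ∀ n, b n ≤ u n := fun n => le_sup_right
  have hcu : ∀ n, c n ≤ u n := fun n => le_sup_right.trans (h1 n).ge
  have hind' : ∀ n m : ℕ, n < m → u n ⊓ (Finset.Ioc n m).sup u = ⊥ := hind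
  refine ⟨bpersp_csup_meet_bot csup h_ub h_lub h_cont u a b hau hbu hab hind', csup c, ?_, ?_,
    bpersp_csup_meet_bot csup h_ub h_lub h_cont u a c hau hcu h3 hind',
    bpersp_csup_meet_bot csup h_ub h_lub h_cont u b c hbu hcu h4 hind'⟩
  · apply le_antisymm
    · refine sup_le le_sup_left (h_lub b _ fun n => ?_)
      calc b n ≤ a n ⊔ b n := le_sup_right
        _ = a n ⊔ c n := h1 n
        _ ≤ csup a ⊔ csup c := sup_le_sup (h_ub a n) (h_ub c n)
    · refine sup_le le_sup_left (h_lub c _ fun n => ?_)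
      calc c n ≤ a n ⊔ b n := hcu n
        _ ≤ csup a ⊔ csup b := sup_le_sup (h_ub a n) (h_ub b n)
  · apply le_antisymm
    · refine sup_le (h_lub a _ fun n => ?_) le_sup_left
      calc a n ≤ a n ⊔ b n := le_sup_left
        _ = b n ⊔ c n := h2 n
        _ ≤ csup b ⊔ csup c := sup_le_sup (h_ub b n) (h_ub c n)
    · refine sup_le le_sup_right (h_lub c _ fun n => ?_)
      calc c n ≤ a n ⊔ b n := hcu n
        _ ≤ csup a ⊔ csup b := sup_le_sup (h_ub a n) (h_ub b n)
end

section
/- Let R be a von Neumann regular ring and a, b ∈ R with aba = a and bab = b, and set e = ba, f = ab. If eR and fR are perspective in the lattice of principal right ideals of R, then there exists a unit u of R with aua = a. -/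
/-- A principal right ideal of `R`, viewed as a submodule of `R` over `Rᵐᵒᵖ`. -/
def IsPrincipalRightIdeal {R : Type*} [Ring R] (I : Submodule Rᵐᵒᵖ R) : Prop :=
  ∃ g : R, I = Submodule.span Rᵐᵒᵖ ({g} : Set R)

/-!
Left multiplication by `b` is an isomorphism `abR ≅ baR` of right ideals, with inverse left
multiplication by `a`. Since `abR` and `baR` have a common complement `C`, this isomorphism together
with the identity of `C` is an automorphism `ψ` of the right module `R = abR ⊕ C = baR ⊕ C`.
Every automorphism of `R_R` is left multiplication by the unit `u = ψ 1`, and then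
`a u a = a ψ(a) = a (b a) = a`.
-/

open MulOpposite Submodule

theorem LinearEquiv.exists_unit_apply_eq_mul {R : Type*} [Ring R] (ψ : R ≃ₗ[Rᵐᵒᵖ] R) :
    ∃ u : Rˣ, ∀ x, ψ x = u * x :=
  ⟨Units.map (RingEquiv.moduleEndSelfOp R).symm.toMonoidHom
    (LinearMap.GeneralLinearGroup.ofLinearEquiv ψ), fun x => by simpa using ψ.map_smul (op x) 1⟩

theorem Submodule.exists_linearEquiv_extend_of_isCompl {R M : Type*} [Ring R] [AddCommGroup M]
    [Module R M] {p q r : Submodule R M} (hp : IsCompl p r) (hq : IsCompl q r)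
    (e : p ≃ₗ[R] q) : ∃ ψ : M ≃ₗ[R] M, ∀ x : p, ψ x = e x := by
  refine ⟨(prodEquivOfIsCompl p r hp).symm ≪≫ₗ e.prodCongr (LinearEquiv.refl R r) ≪≫ₗ
    prodEquivOfIsCompl q r hq, fun x => ?_⟩
  simp

theorem IsIdempotentElem.mem_span_singleton_op_iff {R : Type*} [Ring R] {e : R}
    (he : IsIdempotentElem e) {x : R} : x ∈ span Rᵐᵒᵖ {e} ↔ e * x = x := by
  rw [mem_span_singleton]
  constructor
  · rintro ⟨r, rfl⟩
    simp [smul_eq_mul_unop, ← mul_assoc, he.eq]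
  · intro h
    exact ⟨op x, by simpa [smul_eq_mul_unop] using h⟩

section ReflexiveInverse

variable {R : Type*} [Ring R] {a b : R}

theorem isIdempotentElem_mul_of_mul_mul_eq (hab : a * b * a = a) : IsIdempotentElem (a * b) := by
  rw [IsIdempotentElem, ← mul_assoc, hab]

theorem mul_mem_span_mul (hba : b * a * b = b) (x : R) : b * x ∈ span Rᵐᵒᵖ {b * a} := by
  rw [(isIdempotentElem_mul_of_mul_mul_eq hba).mem_span_singleton_op_iff, ← mul_assoc, hba]

theorem mul_mul_eq_of_mem_span_mul (hab : a * b * a = a) {x : R} (hx : x ∈ span Rᵐᵒᵖ {a * b}) :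
    a * (b * x) = x := by
  rwa [← mul_assoc, ← (isIdempotentElem_mul_of_mul_mul_eq hab).mem_span_singleton_op_iff]

def spanMulEquivSpanMul (hab : a * b * a = a) (hba : b * a * b = b) :
    span Rᵐᵒᵖ {a * b} ≃ₗ[Rᵐᵒᵖ] span Rᵐᵒᵖ {b * a} where
  toFun x := ⟨b * x, mul_mem_span_mul hba x⟩
  invFun y := ⟨a * y, mul_mem_span_mul hab y⟩
  map_add' x y := Subtype.ext (mul_add b x y)
  map_smul' r x := Subtype.ext (by simp [smul_eq_mul_unop, mul_assoc])
  left_inv x := Subtype.ext (mul_mul_eq_of_mem_span_mul hab x.2)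
  right_inv y := Subtype.ext (mul_mul_eq_of_mem_span_mul hba y.2)

end ReflexiveInverse

theorem stmt18_general {R : Type*} [Ring R]
    (a b : R) (hab : a * b * a = a) (hba : b * a * b = b)
    (hpersp : ∃ C : Submodule Rᵐᵒᵖ R, IsPrincipalRightIdeal C ∧
      IsCompl (Submodule.span Rᵐᵒᵖ ({b * a} : Set R)) C ∧
      IsCompl (Submodule.span Rᵐᵒᵖ ({a * b} : Set R)) C) :
    ∃ u : Rˣ, a * ↑u * a = a := by
  obtain ⟨C, -, hE, hF⟩ := hpersp
  obtain ⟨ψ, hψ⟩ := exists_linearEquiv_extend_of_isCompl hF hE (spanMulEquivSpanMul hab hba)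
  obtain ⟨u, hu⟩ := ψ.exists_unit_apply_eq_mul
  have ha : a ∈ span Rᵐᵒᵖ {a * b} :=
    (isIdempotentElem_mul_of_mul_mul_eq hab).mem_span_singleton_op_iff.2 hab
  refine ⟨u, ?_⟩
  calc a * u * a = a * ψ a := by rw [hu, mul_assoc]
    _ = a * (b * a) := congrArg (a * ·) (hψ ⟨a, ha⟩)
    _ = a := by rw [← mul_assoc, hab]

/-- Let `R` be a von Neumann regular ring, `a, b ∈ R` with
`aba = a`, `bab = b`, `e = ba`, `f = ab`. If `eR` and `fR` are perspective in the
lattice of principal right ideals then there is a unit `u` of `R` with `aua = a`. -/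
theorem stmt18 {R : Type*} [Ring R] (hreg : ∀ a : R, ∃ x, a * x * a = a)
    (a b : R) (hab : a * b * a = a) (hba : b * a * b = b)
    (hpersp : ∃ C : Submodule Rᵐᵒᵖ R, IsPrincipalRightIdeal C ∧
      IsCompl (Submodule.span Rᵐᵒᵖ ({b * a} : Set R)) C ∧
      IsCompl (Submodule.span Rᵐᵒᵖ ({a * b} : Set R)) C) :
    ∃ u : Rˣ, a * ↑u * a = a :=
  stmt18_general a b hab hba hpersp
end

section
/- Let R be a von Neumann regular ring and A, B principal right ideals such that A ∩ B has finite height in the lattice L(R) of principal right ideals. Then A and B are perspective in L(R) if and only if A and B are isomorphic as right R-modules. Consequently, if a ∈ R has a reflexive inverse b with bR ∩ aR of finite height in L(R), then a is unit-regular. -/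
/-- `X` has finite height in the lattice `L(R)` of principal right ideals: the
lengths of chains of principal right ideals below `X` are bounded. -/
def FinHeightInLR {R : Type*} [Ring R] (X : Submodule Rᵐᵒᵖ R) : Prop :=
  ∃ n : ℕ, ∀ l : List (Submodule Rᵐᵒᵖ R), l.Chain' (· < ·) →
    (∀ Y ∈ l, IsPrincipalRightIdeal Y ∧ Y ≤ X) → l.length ≤ n

open Submodule

theorem IsCompl.sup_inf_of_le {α : Type*} [Lattice α] [BoundedOrder α] [IsModularLattice α]
    {a b a' b' : α} (h : IsCompl a b) (h' : IsCompl a' b') (ha' : a' ≤ b) :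
    IsCompl (a ⊔ a') (b ⊓ b') := by
  have hb : a' ⊔ b ⊓ b' = b := by
    rw [inf_comm, ← sup_inf_assoc_of_le _ ha', h'.sup_eq_top, top_inf_eq]
  have ha : (a' ⊔ a) ⊓ b = a' := by
    rw [sup_inf_assoc_of_le _ ha', h.inf_eq_bot, sup_bot_eq]
  constructor
  · rw [disjoint_iff, ← inf_assoc, sup_comm, ha, h'.inf_eq_bot]
  · rw [codisjoint_iff, sup_assoc, hb, h.sup_eq_top]

namespace Submodule

variable {R M : Type*} [Ring R] [AddCommGroup M] [Module R M]

noncomputable def equivOfIsCompl {p q q' : Submodule R M} (h : IsCompl p q) (h' : IsCompl p q') :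
    q ≃ₗ[R] q' :=
  (quotientEquivOfIsCompl p q h).symm.trans (quotientEquivOfIsCompl p q' h')

noncomputable def prodEquivSupOfDisjoint {p q : Submodule R M} (h : Disjoint p q) :
    (p × q) ≃ₗ[R] ↥(p ⊔ q) :=
  (LinearEquiv.ofInjective (p.subtype.coprod q.subtype) <| LinearMap.ker_eq_bot.1 <| by
      rw [LinearMap.ker_coprod_of_disjoint_range _ _ (by simpa using h), ker_subtype, ker_subtype,
        prod_bot]).trans
    (LinearEquiv.ofEq _ _ (sup_eq_range p q).symm)

theorem exists_isCompl_sup_isCompl_sup_of_equiv {X A B T : Submodule R M} (hAB : Disjoint A B)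
    (hX : Disjoint X (A ⊔ B)) (hT : IsCompl (X ⊔ A ⊔ B) T) (e : A ≃ₗ[R] B) :
    ∃ C, IsCompl (X ⊔ A) C ∧ IsCompl (X ⊔ B) C := by
  -- the graph `{a + e a}` of `e`
  set D := LinearMap.range (A.subtype + B.subtype ∘ₗ e.toLinearMap)
  have hD : ∀ a : A, (a : M) + e a ∈ D := fun a => ⟨a, rfl⟩
  have hDle : D ≤ X ⊔ A ⊔ B := by
    rintro _ ⟨a, rfl⟩
    exact add_mem (mem_sup_left (mem_sup_right a.2)) (mem_sup_right (e a).2)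
  have hBXA : Disjoint B (X ⊔ A) := by
    rw [sup_comm]
    exact hAB.symm.disjoint_sup_right_of_disjoint_sup_left (by rwa [sup_comm, disjoint_comm])
  have hAXB : Disjoint A (X ⊔ B) := by
    rw [sup_comm]
    exact hAB.disjoint_sup_right_of_disjoint_sup_left hX.symm
  have hdisjA : Disjoint (X ⊔ A) D := by
    rw [disjoint_def]
    rintro _ hx ⟨a, rfl⟩
    have : (e a : M) ∈ X ⊔ A := by
      simpa using sub_mem hx (mem_sup_right (S := X) a.2)
    have ha : e a = 0 := Subtype.ext ((disjoint_def.1 hBXA) _ (e a).2 this)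
    simp [(LinearEquiv.map_eq_zero_iff e).1 ha]
  have hdisjB : Disjoint (X ⊔ B) D := by
    rw [disjoint_def]
    rintro _ hx ⟨a, rfl⟩
    have : (a : M) ∈ X ⊔ B := by
      simpa using sub_mem hx (mem_sup_right (S := X) (e a).2)
    have ha : a = 0 := Subtype.ext ((disjoint_def.1 hAXB) _ a.2 this)
    simp [ha]
  have hsupA : X ⊔ A ⊔ D = X ⊔ A ⊔ B := by
    refine le_antisymm (sup_le le_sup_left hDle) (sup_le le_sup_left fun b hb => ?_)
    have : b = ((e.symm ⟨b, hb⟩ : A) + e (e.symm ⟨b, hb⟩)) - (e.symm ⟨b, hb⟩ : A) := by simp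
    rw [this]
    exact sub_mem (mem_sup_right (hD _)) (mem_sup_left (mem_sup_right (e.symm _).2))
  have hsupB : X ⊔ B ⊔ D = X ⊔ A ⊔ B := by
    refine le_antisymm (sup_le (sup_le (le_sup_left.trans le_sup_left) le_sup_right) hDle)
      (sup_le (sup_le (le_sup_left.trans le_sup_left) fun a ha => ?_)
        (le_sup_right.trans le_sup_left))
    have : a = ((⟨a, ha⟩ : A) + e ⟨a, ha⟩) - (e ⟨a, ha⟩ : M) := by simp
    rw [this]
    exact sub_mem (mem_sup_right (hD _)) (mem_sup_left (mem_sup_right (e _).2))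
  exact ⟨D ⊔ T, hdisjA.isCompl_sup_right_of_isCompl_sup_left (by rwa [hsupA]),
    hdisjB.isCompl_sup_right_of_isCompl_sup_left (by rwa [hsupB])⟩

theorem isCompl_of_bijective_projectionOnto_comp_subtype {p q r : Submodule R M}
    (h : IsCompl p q) (hr : Function.Bijective (p.projectionOnto q h ∘ₗ r.subtype)) :
    IsCompl r q := by
  constructor
  · rw [disjoint_def]
    intro x hxr hxq
    have : (p.projectionOnto q h ∘ₗ r.subtype) ⟨x, hxr⟩ = 0 := by
      simpa using projectionOnto_apply_of_mem_right h hxq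
    simpa using hr.1 (this.trans (map_zero _).symm)
  · rw [codisjoint_iff, eq_top_iff, ← h.sup_eq_top]
    refine sup_le (fun x hx => ?_) le_sup_right
    obtain ⟨y, hy⟩ := hr.2 ⟨x, hx⟩
    have hyx : (y : M) - x ∈ q := by
      rw [← projectionOnto_apply_eq_zero_iff h, map_sub, projectionOnto_apply_of_mem_left h hx]
      exact sub_eq_zero.2 hy
    simpa using sub_mem (mem_sup_left (T := q) y.2) (mem_sup_right hyx)

theorem nonempty_equiv_of_isCompl_of_isSimpleModule {U V U' V' : Submodule R M}
    (hU : IsCompl U V) (hU' : IsCompl U' V') [IsSimpleModule R U] (e : U ≃ₗ[R] U') :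
    Nonempty (V ≃ₗ[R] V') := by
  have : IsSimpleModule R U' := IsSimpleModule.congr e.symm
  rcases (U.projectionOnto V hU ∘ₗ U'.subtype).bijective_or_eq_zero with h | h
  · exact ⟨equivOfIsCompl (isCompl_of_bijective_projectionOnto_comp_subtype hU h) hU'⟩
  -- Otherwise `U' ≤ V`, so `U ⊓ U' = ⊥` and the graph of `e` gives a common complement.
  have hU'V : U' ≤ V := fun x hx => by
    simpa using LinearMap.congr_fun h ⟨x, hx⟩
  obtain ⟨C, hUC, hU'C⟩ := exists_isCompl_sup_isCompl_sup_of_equiv (X := ⊥)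
    (hU.disjoint.mono_right hU'V) (by simp) (by simpa using hU.sup_inf_of_le hU' hU'V) e
  rw [bot_sup_eq] at hUC hU'C
  exact ⟨(equivOfIsCompl hU hUC).trans (equivOfIsCompl hU' hU'C).symm⟩

theorem nonempty_equiv_of_prod_equiv_prod_of_isSimpleModule {S N₁ N₂ : Type*} [AddCommGroup S]
    [Module R S] [AddCommGroup N₁] [Module R N₁] [AddCommGroup N₂] [Module R N₂]
    [IsSimpleModule R S] (f : (S × N₁) ≃ₗ[R] (S × N₂)) : Nonempty (N₁ ≃ₗ[R] N₂) := by
  have hinl : Function.Injective (f.toLinearMap ∘ₗ LinearMap.inl R S N₁) :=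
    f.injective.comp LinearMap.inl_injective
  have hinr : Function.Injective (f.toLinearMap ∘ₗ LinearMap.inr R S N₁) :=
    f.injective.comp LinearMap.inr_injective
  have hcompl : IsCompl (LinearMap.range (f.toLinearMap ∘ₗ LinearMap.inl R S N₁))
      (LinearMap.range (f.toLinearMap ∘ₗ LinearMap.inr R S N₁)) := by
    rw [LinearMap.range_comp, LinearMap.range_comp]
    exact LinearMap.isCompl_range_inl_inr.map (orderIsoMapComap f)
  let eS := LinearEquiv.ofInjective _ (LinearMap.inl_injective (R := R) (M := S) (M₂ := N₂))
  have : IsSimpleModule R (LinearMap.range (LinearMap.inl R S N₂)) := IsSimpleModule.congr eS.symm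
  obtain ⟨g⟩ := nonempty_equiv_of_isCompl_of_isSimpleModule LinearMap.isCompl_range_inl_inr
    hcompl (eS.symm.trans (LinearEquiv.ofInjective _ hinl))
  exact ⟨(LinearEquiv.ofInjective _ hinr).trans (g.symm.trans
    (LinearEquiv.ofInjective _ LinearMap.inr_injective).symm)⟩

theorem _root_.LinearEquiv.exists_extend_of_isCompl {A B C : Submodule R M} (hA : IsCompl A C)
    (hB : IsCompl B C) (e : A ≃ₗ[R] B) :
    ∃ h : M ≃ₗ[R] M, ∀ x : A, h x = e x := by
  refine ⟨(prodEquivOfIsCompl A C hA).symm.trans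
    ((e.prodCongr (LinearEquiv.refl R C)).trans (prodEquivOfIsCompl B C hB)), fun x => ?_⟩
  simp

end Submodule

def IsVonNeumannRegular (R : Type*) [Ring R] : Prop := ∀ a : R, ∃ x, a * x * a = a

section RegularRing

variable {R : Type*} [Ring R]

theorem mem_span_singleton_iff_exists_mul {g x : R} :
    x ∈ span Rᵐᵒᵖ {g} ↔ ∃ r, g * r = x :=
  mem_span_singleton.trans ⟨fun ⟨a, h⟩ => ⟨a.unop, h⟩, fun ⟨r, h⟩ => ⟨.op r, h⟩⟩

theorem mul_mem_span_singleton (g r : R) : g * r ∈ span Rᵐᵒᵖ {g} :=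
  mem_span_singleton_iff_exists_mul.2 ⟨r, rfl⟩

theorem LinearMap.apply_eq_apply_one_mul (f : R →ₗ[Rᵐᵒᵖ] R) (x : R) : f x = f 1 * x := by
  simpa using f.map_smul (MulOpposite.op x) 1

theorem isPrincipalRightIdeal_bot : IsPrincipalRightIdeal (⊥ : Submodule Rᵐᵒᵖ R) :=
  ⟨0, by simp⟩

theorem IsCompl.isPrincipalRightIdeal {I J : Submodule Rᵐᵒᵖ R} (h : IsCompl I J) :
    IsPrincipalRightIdeal I := by
  refine ⟨I.projection J h 1, ext fun y => ?_⟩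
  rw [mem_span_singleton_iff_exists_mul]
  refine ⟨fun hy => ⟨y, ?_⟩, ?_⟩
  · rw [← LinearMap.apply_eq_apply_one_mul, projection_apply_of_mem_left h hy]
  · rintro ⟨r, rfl⟩
    rw [← LinearMap.apply_eq_apply_one_mul]
    exact projection_apply_mem h r

theorem IsAtom.isPrincipalRightIdeal {S : Submodule Rᵐᵒᵖ R} (hS : IsAtom S) :
    IsPrincipalRightIdeal S := by
  obtain ⟨s, hs, hs0⟩ := exists_mem_ne_zero_of_ne_bot hS.1
  refine ⟨s, ((hS.le_iff.1 ((span_singleton_le_iff_mem _ _).2 hs)).resolve_left ?_).symm⟩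
  simpa using hs0

theorem IsPrincipalRightIdeal.exists_isIdempotentElem (hR : IsVonNeumannRegular R)
    {I : Submodule Rᵐᵒᵖ R} (hI : IsPrincipalRightIdeal I) :
    ∃ e, IsIdempotentElem e ∧ I = span Rᵐᵒᵖ {e} := by
  obtain ⟨g, rfl⟩ := hI
  obtain ⟨x, hx⟩ := hR g
  refine ⟨g * x, by rw [IsIdempotentElem, ← mul_assoc, hx], le_antisymm ?_ ?_⟩
  · exact (span_singleton_le_iff_mem _ _).2 (mem_span_singleton_iff_exists_mul.2 ⟨g, hx⟩)
  · exact (span_singleton_le_iff_mem _ _).2 (mul_mem_span_singleton g x)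

theorem range_moduleEndSelfOp (e : R) :
    LinearMap.range (RingEquiv.moduleEndSelfOp R e) = span Rᵐᵒᵖ {e} :=
  ext fun _ => mem_span_singleton_iff_exists_mul.symm

theorem IsIdempotentElem.isCompl_span_singleton_ker {e : R} (he : IsIdempotentElem e) :
    IsCompl (span Rᵐᵒᵖ {e}) (LinearMap.ker (RingEquiv.moduleEndSelfOp R e)) := by
  rw [← range_moduleEndSelfOp]
  exact LinearMap.IsIdempotentElem.isCompl (he.map (RingEquiv.moduleEndSelfOp R))

theorem IsPrincipalRightIdeal.exists_isCompl (hR : IsVonNeumannRegular R)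
    {I : Submodule Rᵐᵒᵖ R} (hI : IsPrincipalRightIdeal I) : ∃ J, IsCompl I J := by
  obtain ⟨e, he, rfl⟩ := hI.exists_isIdempotentElem hR
  exact ⟨_, he.isCompl_span_singleton_ker⟩

theorem IsPrincipalRightIdeal.sup (hR : IsVonNeumannRegular R) {A B : Submodule Rᵐᵒᵖ R}
    (hA : IsPrincipalRightIdeal A) (hB : IsPrincipalRightIdeal B) :
    IsPrincipalRightIdeal (A ⊔ B) := by
  obtain ⟨e, he, rfl⟩ := hA.exists_isIdempotentElem hR
  obtain ⟨b, rfl⟩ := hB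
  -- `eR + bR = eR + cR`, and `cR` lies in the complement `ker (e * ·)` of `eR`
  set c := (1 - e) * b
  have hsup : span Rᵐᵒᵖ {e} ⊔ span Rᵐᵒᵖ {b} = span Rᵐᵒᵖ {e} ⊔ span Rᵐᵒᵖ {c} := by
    refine le_antisymm (sup_le le_sup_left ((span_singleton_le_iff_mem _ _).2 ?_))
      (sup_le le_sup_left ((span_singleton_le_iff_mem _ _).2 ?_))
    · have : b = e * b + c := by simp [c, sub_mul]
      rw [this]
      exact add_mem (mem_sup_left (mul_mem_span_singleton e b))
        (mem_sup_right (mem_span_singleton_self c))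
    · have : c = b - e * b := by simp [c, sub_mul]
      rw [this]
      exact sub_mem (mem_sup_right (mem_span_singleton_self b))
        (mem_sup_left (mul_mem_span_singleton e b))
  have hc : span Rᵐᵒᵖ {c} ≤ LinearMap.ker (RingEquiv.moduleEndSelfOp R e) := by
    rw [span_singleton_le_iff_mem, LinearMap.mem_ker]
    change e * ((1 - e) * b) = 0
    rw [← mul_assoc, mul_sub, mul_one, he.eq, sub_self, zero_mul]
  obtain ⟨K, hK⟩ := IsPrincipalRightIdeal.exists_isCompl hR ⟨c, rfl⟩
  rw [hsup]
  exact (he.isCompl_span_singleton_ker.sup_inf_of_le hK hc).isPrincipalRightIdeal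

theorem IsPrincipalRightIdeal.inf (hR : IsVonNeumannRegular R) {A B : Submodule Rᵐᵒᵖ R}
    (hA : IsPrincipalRightIdeal A) (hB : IsPrincipalRightIdeal B) :
    IsPrincipalRightIdeal (A ⊓ B) := by
  obtain ⟨e, he, rfl⟩ := hA.exists_isIdempotentElem hR
  obtain ⟨f, hf, rfl⟩ := hB.exists_isIdempotentElem hR
  obtain ⟨y, hy⟩ := hR ((1 - f) * e)
  -- `eR ∩ fR = e (1 - g) R` for `g = y (1 - f) e`, since `(1 - g) R` is the right annihilator
  -- of `(1 - f) e`
  refine ⟨e * (1 - y * ((1 - f) * e)), le_antisymm ?_ ?_⟩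
  · rintro z ⟨hzA, hzB⟩
    obtain ⟨r, rfl⟩ := mem_span_singleton_iff_exists_mul.1 hzA
    obtain ⟨s, hs⟩ := mem_span_singleton_iff_exists_mul.1 hzB
    have hee : ∀ t, e * (e * t) = e * t := fun t => by rw [← mul_assoc, he.eq]
    have hfe : f * (e * r) = e * r := by rw [← hs, ← mul_assoc, hf.eq]
    refine mem_span_singleton_iff_exists_mul.2 ⟨e * r, ?_⟩
    simp only [mul_sub, sub_mul, one_mul, mul_one, mul_assoc, hee, hfe, sub_self,
      sub_zero]
  · refine le_inf ((span_singleton_le_iff_mem _ _).2 (mul_mem_span_singleton _ _))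
      ((span_singleton_le_iff_mem _ _).2
        (mem_span_singleton_iff_exists_mul.2 ⟨e * (1 - y * ((1 - f) * e)), ?_⟩))
    have : (1 - f) * (e * (1 - y * ((1 - f) * e))) = 0 := by
      rw [← mul_assoc, mul_sub, mul_one, ← mul_assoc, hy, sub_self]
    calc f * (e * (1 - y * ((1 - f) * e)))
        = e * (1 - y * ((1 - f) * e)) - (1 - f) * (e * (1 - y * ((1 - f) * e))) := by noncomm_ring
      _ = e * (1 - y * ((1 - f) * e)) := by rw [this, sub_zero]

def HeightInLRLE (X : Submodule Rᵐᵒᵖ R) (n : ℕ) : Prop :=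
  ∀ l : List (Submodule Rᵐᵒᵖ R), l.IsChain (· < ·) →
    (∀ Y ∈ l, IsPrincipalRightIdeal Y ∧ Y ≤ X) → l.length ≤ n

theorem HeightInLRLE.mono {X Y : Submodule Rᵐᵒᵖ R} {n : ℕ} (h : HeightInLRLE X n) (hYX : Y ≤ X) :
    HeightInLRLE Y n :=
  fun l hl hY => h l hl fun Z hZ => ⟨(hY Z hZ).1, (hY Z hZ).2.trans hYX⟩

theorem HeightInLRLE.of_lt {X Y : Submodule Rᵐᵒᵖ R} {n : ℕ} (h : HeightInLRLE X (n + 1))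
    (hX : IsPrincipalRightIdeal X) (hYX : Y < X) : HeightInLRLE Y n := by
  intro l hl hY
  have hchain : (l ++ [X]).IsChain (· < ·) := by
    refine List.isChain_append.2 ⟨hl, List.isChain_singleton _, fun Z hZ W hW => ?_⟩
    simp only [List.head?_cons, Option.mem_def, Option.some.injEq] at hW
    subst hW
    exact (hY Z (List.mem_of_getLast? hZ)).2.trans_lt hYX
  have := h _ hchain (by
    simp only [List.mem_append, List.mem_singleton]
    rintro Z (hZ | rfl)
    · exact ⟨(hY Z hZ).1, (hY Z hZ).2.trans hYX.le⟩
    · exact ⟨hX, le_rfl⟩)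
  simpa using this

theorem not_heightInLRLE_zero (X : Submodule Rᵐᵒᵖ R) : ¬ HeightInLRLE X 0 := fun h => by
  simpa using h [⊥] (List.isChain_singleton _) (by simpa using isPrincipalRightIdeal_bot)

theorem HeightInLRLE.exists_isAtom_le {n : ℕ} : ∀ {X : Submodule Rᵐᵒᵖ R}, HeightInLRLE X n →
    X ≠ ⊥ → ∃ S ≤ X, IsAtom S := by
  induction n with
  | zero => exact fun h => absurd h (not_heightInLRLE_zero _)
  | succ n ih =>
    intro X h hX
    obtain ⟨x, hx, hx0⟩ := exists_mem_ne_zero_of_ne_bot hX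
    have hxX : span Rᵐᵒᵖ {x} ≤ X := (span_singleton_le_iff_mem _ _).2 hx
    by_cases hatom : IsAtom (span Rᵐᵒᵖ {x})
    · exact ⟨_, hxX, hatom⟩
    obtain ⟨Z, hZx, hZ⟩ : ∃ Z < span Rᵐᵒᵖ {x}, Z ≠ ⊥ := by
      simpa [IsAtom, hx0] using hatom
    obtain ⟨S, hSZ, hS⟩ := ih ((h.mono hxX).of_lt ⟨x, rfl⟩ hZx) hZ
    exact ⟨S, hSZ.trans (hZx.le.trans hxX), hS⟩

theorem HeightInLRLE.nonempty_equiv_of_prod_equiv_prod (hR : IsVonNeumannRegular R) {M N : Type*}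
    [AddCommGroup M] [Module Rᵐᵒᵖ M] [AddCommGroup N] [Module Rᵐᵒᵖ N] {n : ℕ} :
    ∀ {X : Submodule Rᵐᵒᵖ R}, IsPrincipalRightIdeal X → HeightInLRLE X n →
      ((X × M) ≃ₗ[Rᵐᵒᵖ] (X × N)) → Nonempty (M ≃ₗ[Rᵐᵒᵖ] N) := by
  induction n with
  | zero => exact fun _ h => absurd h (not_heightInLRLE_zero _)
  | succ n ih =>
    intro X hX h f
    rcases eq_or_ne X ⊥ with rfl | hX0
    · exact ⟨LinearEquiv.uniqueProd.symm.trans (f.trans LinearEquiv.uniqueProd)⟩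
    obtain ⟨S, hSX, hS⟩ := h.exists_isAtom_le hX0
    obtain ⟨Sc, hSc⟩ := hS.isPrincipalRightIdeal.exists_isCompl hR
    have hsup : S ⊔ Sc ⊓ X = X := by
      rw [← sup_inf_assoc_of_le _ hSX, hSc.sup_eq_top, top_inf_eq]
    have hdisj : Disjoint S (Sc ⊓ X) := hSc.disjoint.mono_right inf_le_left
    have hlt : Sc ⊓ X < X := by
      conv_rhs => rw [← hsup]
      exact right_lt_sup.2 fun hle => hS.1 (hdisj.eq_bot_of_le hle)
    have : IsSimpleModule Rᵐᵒᵖ S := isSimpleModule_iff_isAtom.2 hS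
    let eX := (prodEquivSupOfDisjoint hdisj).trans (LinearEquiv.ofEq _ _ hsup)
    obtain ⟨g⟩ := nonempty_equiv_of_prod_equiv_prod_of_isSimpleModule
      ((LinearEquiv.prodAssoc _ _ _ _).symm.trans
        (((eX.prodCongr (LinearEquiv.refl _ M)).trans f).trans
          ((eX.prodCongr (LinearEquiv.refl _ N)).symm.trans (LinearEquiv.prodAssoc _ _ _ _))))
    exact ih (hSc.symm.isPrincipalRightIdeal.inf hR hX) (h.of_lt hX hlt) g

theorem exists_isCompl_isCompl_of_equiv (hR : IsVonNeumannRegular R) {A B : Submodule Rᵐᵒᵖ R}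
    (hA : IsPrincipalRightIdeal A) (hB : IsPrincipalRightIdeal B) (hAB : FinHeightInLR (A ⊓ B))
    (φ : A ≃ₗ[Rᵐᵒᵖ] B) : ∃ C, IsPrincipalRightIdeal C ∧ IsCompl A C ∧ IsCompl B C := by
  obtain ⟨n, hn⟩ := hAB
  -- `A = X ⊕ (Y ⊓ A)` and `B = X ⊕ (Y ⊓ B)` for a complement `Y` of `X = A ⊓ B`; cancel `X`
  set X := A ⊓ B
  obtain ⟨Y, hY⟩ := (hA.inf hR hB).exists_isCompl hR
  have hXA : X ⊔ Y ⊓ A = A := by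
    rw [← sup_inf_assoc_of_le _ inf_le_left, hY.sup_eq_top, top_inf_eq]
  have hXB : X ⊔ Y ⊓ B = B := by
    rw [← sup_inf_assoc_of_le _ inf_le_right, hY.sup_eq_top, top_inf_eq]
  have hdisjA : Disjoint X (Y ⊓ A) := hY.disjoint.mono_right inf_le_left
  have hdisjB : Disjoint X (Y ⊓ B) := hY.disjoint.mono_right inf_le_left
  let eA := (prodEquivSupOfDisjoint hdisjA).trans (LinearEquiv.ofEq _ _ hXA)
  let eB := (prodEquivSupOfDisjoint hdisjB).trans (LinearEquiv.ofEq _ _ hXB)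
  obtain ⟨ψ⟩ := HeightInLRLE.nonempty_equiv_of_prod_equiv_prod hR (hA.inf hR hB) hn
    (eA.trans (φ.trans eB.symm))
  have hA'B' : Disjoint (Y ⊓ A) (Y ⊓ B) := by
    rw [disjoint_iff, inf_inf_inf_comm, inf_idem, hY.symm.inf_eq_bot]
  obtain ⟨T, hT⟩ := (hA.sup hR hB).exists_isCompl hR
  have hsup : X ⊔ Y ⊓ A ⊔ Y ⊓ B = A ⊔ B := by
    conv_rhs => rw [← hXB]
    rw [hXA, ← sup_assoc, sup_eq_left.2 (inf_le_left : X ≤ A)]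
  obtain ⟨C, hAC, hBC⟩ := exists_isCompl_sup_isCompl_sup_of_equiv hA'B'
    (hY.disjoint.mono_right (sup_le inf_le_left inf_le_left))
    (by rwa [hsup]) ψ
  rw [hXA] at hAC
  rw [hXB] at hBC
  exact ⟨C, hAC.symm.isPrincipalRightIdeal, hAC, hBC⟩

theorem exists_unit_forall_apply_eq_mul (h : R ≃ₗ[Rᵐᵒᵖ] R) : ∃ u : Rˣ, ∀ x, h x = u * x := by
  have hu := h.toLinearMap.apply_eq_apply_one_mul
  have hv := h.symm.toLinearMap.apply_eq_apply_one_mul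
  exact ⟨⟨h 1, h.symm 1, by simpa using (hu (h.symm 1)).symm, by simpa using (hv (h 1)).symm⟩, hu⟩

def spanSingletonEquivOfReflexive {a b : R} (hab : a * b * a = a) (hba : b * a * b = b) :
    span Rᵐᵒᵖ {a} ≃ₗ[Rᵐᵒᵖ] span Rᵐᵒᵖ {b} :=
  LinearEquiv.ofLinearMap
    (LinearMap.codRestrict _ (RingEquiv.moduleEndSelfOp R b ∘ₗ (span Rᵐᵒᵖ {a}).subtype)
      fun x => mul_mem_span_singleton b x)
    (LinearMap.codRestrict _ (RingEquiv.moduleEndSelfOp R a ∘ₗ (span Rᵐᵒᵖ {b}).subtype)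
      fun x => mul_mem_span_singleton a x)
    (LinearMap.ext fun ⟨y, hy⟩ => by
      obtain ⟨r, rfl⟩ := mem_span_singleton_iff_exists_mul.1 hy
      refine Subtype.ext (?_ : b * (a * (b * r)) = b * r)
      rw [← mul_assoc, ← mul_assoc, hba])
    (LinearMap.ext fun ⟨x, hx⟩ => by
      obtain ⟨r, rfl⟩ := mem_span_singleton_iff_exists_mul.1 hx
      refine Subtype.ext (?_ : a * (b * (a * r)) = a * r)
      rw [← mul_assoc, ← mul_assoc, hab])

theorem exists_unit_mul_mul_eq_self (hR : IsVonNeumannRegular R) {a b : R} (hab : a * b * a = a)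
    (hba : b * a * b = b) (hfin : FinHeightInLR (span Rᵐᵒᵖ {a} ⊓ span Rᵐᵒᵖ {b})) :
    ∃ u : Rˣ, a * u * a = a := by
  let e := spanSingletonEquivOfReflexive hab hba
  obtain ⟨C, -, haC, hbC⟩ := exists_isCompl_isCompl_of_equiv hR ⟨a, rfl⟩ ⟨b, rfl⟩ hfin e
  obtain ⟨h, hh⟩ := e.exists_extend_of_isCompl haC hbC
  obtain ⟨u, hu⟩ := exists_unit_forall_apply_eq_mul h
  have hua : u * a = b * a := by
    rw [← hu, hh ⟨a, mem_span_singleton_self a⟩]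
    rfl
  exact ⟨u, by rw [mul_assoc, hua, ← mul_assoc, hab]⟩

end RegularRing

/-- In a von Neumann regular ring `R`, if `A, B` are principal right
ideals with `A ⊓ B` of finite height in `L(R)`, then `A` and `B` are perspective in
`L(R)` iff they are isomorphic as right `R`-modules. Consequently, if `a` has a
reflexive inverse `b` with `bR ⊓ aR` of finite height in `L(R)`, then `a` is
unit-regular. -/
theorem stmt19 {R : Type*} [Ring R] (hreg : ∀ a : R, ∃ x, a * x * a = a) :
    (∀ A B : Submodule Rᵐᵒᵖ R, IsPrincipalRightIdeal A → IsPrincipalRightIdeal B →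
      FinHeightInLR (A ⊓ B) →
      ((∃ C : Submodule Rᵐᵒᵖ R, IsPrincipalRightIdeal C ∧ IsCompl A C ∧ IsCompl B C)
        ↔ Nonempty (A ≃ₗ[Rᵐᵒᵖ] B))) ∧
    (∀ a b : R, a * b * a = a → b * a * b = b →
      FinHeightInLR (Submodule.span Rᵐᵒᵖ ({b} : Set R) ⊓
        Submodule.span Rᵐᵒᵖ ({a} : Set R)) →
      ∃ u : Rˣ, a * ↑u * a = a) := by
  refine ⟨fun A B hA hB hAB => ⟨?_, ?_⟩, fun a b hab hba hfin => ?_⟩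
  · rintro ⟨C, -, hAC, hBC⟩
    exact ⟨equivOfIsCompl hAC.symm hBC.symm⟩
  · rintro ⟨φ⟩
    exact exists_isCompl_isCompl_of_equiv hreg hA hB hAB φ
  · exact exists_unit_mul_mul_eq_self hreg hab hba (by rwa [inf_comm])
end
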